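/- Let q be a prime number and let k, l, m be integers with k, l, m ≥ 2 and gcd(l − 1, k − 1) = m − 1. Then for every rational number α with α ∉ {0, q^m, q^l, q^k}, one has: α ∈ ℚ-KS(qˡ) and α ∈ ℚ-KS(q^k) if and only if α ∈ ℚ-KS(q^m). -/

import Mathlib

/-!
Write `D = α.den * q - α.num`. For `N = q ^ l` the only prime to test is `q`, and the identity
`α.den * q ^ l - α.num = q ^ (l - 1) * D + α.num * (q ^ (l - 1) - 1)` turns the Korselt condition
into `D ∣ α.num * (q ^ (l - 1) - 1)`. The exponents `e` with `D ∣ α.num * (q ^ e - 1)` are those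
with `q ^ e = 1` modulo the ideal `(D) : α.num`, so they are exactly the multiples of one number;
in particular `l - 1` and `k - 1` both belong to this set iff their gcd `m - 1` does.
-/

/-- `α` is an `N`-Korselt base: `α ≠ 0`, `α ≠ N`, and for every prime `p` dividing `N`,
`α.den * p - α.num` divides `α.den * N - α.num`. -/
def QKS (N : ℕ) (α : ℚ) : Prop :=
  α ≠ 0 ∧ α ≠ (N : ℚ) ∧
    ∀ p : ℕ, p.Prime → p ∣ N →
      ((α.den : ℤ) * p - α.num) ∣ ((α.den : ℤ) * N - α.num)

theorem dvd_mul_pow_gcd_sub_one_iff {R : Type*} [CommRing R] {d n x : R} {a b : ℕ} :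
    d ∣ n * (x ^ a.gcd b - 1) ↔ d ∣ n * (x ^ a - 1) ∧ d ∣ n * (x ^ b - 1) := by
  let I : Ideal R := (Ideal.span {d}).colon {n}
  have hI (y : R) : d ∣ n * (y - 1) ↔ Ideal.Quotient.mk I y = 1 := by
    rw [← sub_eq_zero, ← map_one (Ideal.Quotient.mk I), ← map_sub, Ideal.Quotient.eq_zero_iff_mem,
      Submodule.mem_colon_singleton, Ideal.mem_span_singleton, smul_eq_mul, mul_comm]
  simp only [hI, map_pow, pow_gcd_eq_one]

theorem sub_dvd_mul_pow_succ_sub_iff {R : Type*} [CommRing R] (d n x : R) (l : ℕ) :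
    d * x - n ∣ d * x ^ (l + 1) - n ↔ d * x - n ∣ n * (x ^ l - 1) := by
  rw [show d * x ^ (l + 1) - n = x ^ l * (d * x - n) + n * (x ^ l - 1) by ring]
  exact dvd_add_right (dvd_mul_left _ _)

theorem Nat.Prime.forall_prime_dvd_pow_iff {q : ℕ} (hq : q.Prime) {l : ℕ} (hl : l ≠ 0)
    (P : ℕ → Prop) : (∀ p : ℕ, p.Prime → p ∣ q ^ l → P p) ↔ P q := by
  refine ⟨fun h ↦ h q hq (dvd_pow_self q hl), fun h p hp hpq ↦ ?_⟩
  rwa [(Nat.prime_dvd_prime_iff_eq hp hq).mp (hp.dvd_of_dvd_pow hpq)]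

/-- For `l = 0` both sides say `α ≠ 0 ∧ α ≠ 1`: `q ^ 0` has no prime divisor and `l - 1`
truncates to `0`. -/
theorem qks_prime_pow_iff {q : ℕ} (hq : q.Prime) (l : ℕ) (α : ℚ) :
    QKS (q ^ l) α ↔ α ≠ 0 ∧ α ≠ (q : ℚ) ^ l ∧
      ((α.den : ℤ) * q - α.num) ∣ α.num * ((q : ℤ) ^ (l - 1) - 1) := by
  unfold QKS
  rcases l with _ | l
  · simp +contextual
  · rw [hq.forall_prime_dvd_pow_iff l.succ_ne_zero]
    push_cast
    rw [sub_dvd_mul_pow_succ_sub_iff]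

theorem stmt_5_general (q : ℕ) (hq : q.Prime) (k l m : ℕ) (hgcd : Nat.gcd (l - 1) (k - 1) = m - 1) (α : ℚ)
    (hm' : α ≠ (q : ℚ) ^ m) (hl' : α ≠ (q : ℚ) ^ l) (hk' : α ≠ (q : ℚ) ^ k) :
    (QKS (q ^ l) α ∧ QKS (q ^ k) α) ↔ QKS (q ^ m) α := by
  rw [qks_prime_pow_iff hq, qks_prime_pow_iff hq, qks_prime_pow_iff hq, ← hgcd,
    dvd_mul_pow_gcd_sub_one_iff]
  tauto

theorem stmt_5 (q : ℕ) (hq : q.Prime) (k l m : ℕ) (hk : 2 ≤ k) (hl : 2 ≤ l)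
    (hm : 2 ≤ m) (hgcd : Nat.gcd (l - 1) (k - 1) = m - 1) (α : ℚ)
    (h0 : α ≠ 0) (hm' : α ≠ (q : ℚ) ^ m) (hl' : α ≠ (q : ℚ) ^ l) (hk' : α ≠ (q : ℚ) ^ k) :
    (QKS (q ^ l) α ∧ QKS (q ^ k) α) ↔ QKS (q ^ m) α :=
  stmt_5_general q hq k l m hgcd α hm' hl' hk'
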